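/- arXiv:2508.20211 — 5 statements merged into one kernel-verified Lean document; each statement's English description precedes it below -/
import Mathlib

section
/- Let Z = (Z_1,...,Z_T, Z_{T+1}) be a stochastic process taking values in the finite set 𝕆 = {0,...,m}. For each z ∈ 𝕆, there exists a process U = (U_0,...,U_{T-1}) with each U_t an ℝ^m-valued, σ(Z_1,...,Z_t)-measurable random variable (U_0 deterministic), and a constant c, such that P(Z_{T+1} = z | Z_1,...,Z_T) = c - ∑_{t=0}^{T-1} U_tᵀ e(Z_{t+1}) holds P-almost surely. -/
open Finset

/-- Lattice embedding: `e i` is the `i`-th canonical basis vector of `ℝ^m` for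
`1 ≤ i ≤ m`, and `e 0 = -(e 1 + ⋯ + e m)`. -/
def eVec (m : ℕ) (z : Fin (m + 1)) : Fin m → ℝ :=
  fun j => if z.val = 0 then -1 else if z.val = j.val + 1 then 1 else 0

/-- Restriction of a path to its first `t` coordinates. -/
def restrict {T : ℕ} {α : Type*} (zp : Fin T → α) (t : ℕ) (ht : t ≤ T) : Fin t → α :=
  fun s => zp ⟨s.val, lt_of_lt_of_le s.isLt ht⟩

noncomputable def gdef (m T : ℕ) (f : (Fin T → Fin (m + 1)) → ℝ) :
    (t : ℕ) → (Fin t → Fin (m + 1)) → ℝ := fun t =>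
  if h : t < T then
    fun hist => (∑ w : Fin (m + 1), gdef m T f (t + 1) (Fin.snoc hist w)) / (m + 1)
  else
    fun hist => if h2 : t = T then f (fun i => hist (Fin.cast h2.symm i)) else 0
termination_by t => T - t
decreasing_by omega

lemma gdef_lt {m T : ℕ} (f : (Fin T → Fin (m + 1)) → ℝ) {t : ℕ} (h : t < T)
    (hist : Fin t → Fin (m + 1)) :
    gdef m T f t hist = (∑ w : Fin (m + 1), gdef m T f (t + 1) (Fin.snoc hist w)) / (m + 1) := by
  conv_lhs => rw [gdef]
  rw [dif_pos h]

lemma gdef_top {m T : ℕ} (f : (Fin T → Fin (m + 1)) → ℝ) (hist : Fin T → Fin (m + 1)) :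
    gdef m T f T hist = f hist := by
  conv_lhs => rw [gdef]
  rw [dif_neg (lt_irrefl T), dif_pos rfl]
  simp

lemma gdef_avg {m T : ℕ} (f : (Fin T → Fin (m + 1)) → ℝ) {t : ℕ} (h : t < T)
    (hist : Fin t → Fin (m + 1)) :
    ∑ w : Fin (m + 1), gdef m T f (t + 1) (Fin.snoc hist w) = (m + 1) * gdef m T f t hist := by
  rw [gdef_lt f h hist]
  have : ((m : ℝ) + 1) ≠ 0 := by positivity
  field_simp

lemma restrict_succ {T : ℕ} {α : Type*} (zp : Fin T → α) (t : Fin T) :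
    _root_.restrict zp (t.val + 1) t.isLt
      = Fin.snoc (_root_.restrict zp t.val t.isLt.le) (zp t) := by
  funext s
  refine Fin.lastCases ?_ (fun i => ?_) s
  · rw [Fin.snoc_last]
    exact congrArg zp (Fin.ext rfl)
  · rw [Fin.snoc_castSucc]
    rfl

/-- Nonlinear predictor representation: for a process `Z = (Z_1,…,Z_{T+1})` with
joint law `p` on `𝕆^{T+1}` and a fixed `z ∈ 𝕆`, there is an adapted (history
dependent) process `U` and a constant `c` such that, almost surely (i.e., on
every observation path of positive probability),
`P(Z_{T+1} = z ∣ Z_1,…,Z_T) = c - ∑_{t=0}^{T-1} U_tᵀ e(Z_{t+1})`. -/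
theorem nonlinear_predictor_representation (m T : ℕ)
    (p : (Fin (T + 1) → Fin (m + 1)) → ℝ)
    (hp : ∀ zp, 0 ≤ p zp) (hsum : ∑ zp, p zp = 1)
    (z : Fin (m + 1)) :
    ∃ (U : (t : Fin T) → (Fin t.val → Fin (m + 1)) → Fin m → ℝ) (c : ℝ),
      ∀ zp : Fin T → Fin (m + 1),
        (∑ w, p (Fin.snoc zp w)) ≠ 0 →
        p (Fin.snoc zp z) / (∑ w, p (Fin.snoc zp w)) =
          c - ∑ t : Fin T, ∑ i,
            U t (restrict zp t.val t.isLt.le) i * eVec m (zp t) i := by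
  classical
  set f : (Fin T → Fin (m + 1)) → ℝ := fun zp =>
    if (∑ w, p (Fin.snoc zp w)) = 0 then 0
    else p (Fin.snoc zp z) / (∑ w, p (Fin.snoc zp w)) with hf
  refine ⟨fun t hist i => gdef m T f t.val hist - gdef m T f (t.val + 1) (Fin.snoc hist i.succ),
    gdef m T f 0 (fun i => i.elim0), ?_⟩
  intro zp hzp
  have key : ∀ t : Fin T,
      (∑ i, (gdef m T f t.val (_root_.restrict zp t.val t.isLt.le)
          - gdef m T f (t.val + 1) (Fin.snoc (_root_.restrict zp t.val t.isLt.le) i.succ))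
          * eVec m (zp t) i)
        = gdef m T f t.val (_root_.restrict zp t.val t.isLt.le)
          - gdef m T f (t.val + 1) (_root_.restrict zp (t.val + 1) t.isLt) := by
    intro t
    rw [restrict_succ zp t]
    set h := _root_.restrict zp t.val t.isLt.le with hh
    generalize zp t = w
    have havg := gdef_avg f t.isLt h
    rw [Fin.sum_univ_succ] at havg
    refine Fin.cases ?_ (fun j => ?_) w
    · have he : ∀ i : Fin m, eVec m (0 : Fin (m + 1)) i = -1 := by
        intro i; simp [eVec]
      simp only [he, mul_neg_one, neg_sub, Finset.sum_sub_distrib, Finset.sum_const,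
        Finset.card_univ, Fintype.card_fin, nsmul_eq_mul]
      have hs : ∑ i : Fin m, gdef m T f (t.val + 1) (Fin.snoc h i.succ)
          = ((m : ℝ) + 1) * gdef m T f t.val h
            - gdef m T f (t.val + 1) (Fin.snoc h 0) := by
        linarith [havg]
      rw [hs]; ring
    · have he : ∀ i : Fin m, eVec m (j.succ) i = if i = j then 1 else 0 := by
        intro i
        simp only [eVec, Fin.val_succ, Nat.succ_ne_zero, if_false, Nat.add_right_cancel_iff]
        by_cases hij : i = j
        · simp [hij]
        · rw [if_neg, if_neg hij]
          exact fun hc => hij (Fin.ext hc.symm)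
      simp [he, mul_ite, Finset.sum_ite_eq']
  -- telescoping
  set B : ℕ → ℝ := fun n =>
    if hn : n ≤ T then gdef m T f n (_root_.restrict zp n hn) else 0 with hB
  have hBt : ∀ t : Fin T, B t.val = gdef m T f t.val (_root_.restrict zp t.val t.isLt.le) := by
    intro t
    rw [hB]
    exact dif_pos t.isLt.le
  have hBt1 : ∀ t : Fin T,
      B (t.val + 1) = gdef m T f (t.val + 1) (_root_.restrict zp (t.val + 1) t.isLt) := by
    intro t
    rw [hB]
    exact dif_pos t.isLt
  have htel : ∑ t : Fin T, (B t.val - B (t.val + 1)) = B 0 - B T := by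
    rw [Fin.sum_univ_eq_sum_range (fun n => B n - B (n + 1))]
    exact Finset.sum_range_sub' B T
  have hsum2 : ∑ t : Fin T, (∑ i, ((gdef m T f t.val (_root_.restrict zp t.val t.isLt.le)
          - gdef m T f (t.val + 1) (Fin.snoc (_root_.restrict zp t.val t.isLt.le) i.succ))
          * eVec m (zp t) i)) = B 0 - B T := by
    rw [← htel]
    refine Finset.sum_congr rfl fun t _ => ?_
    rw [key t, hBt t, hBt1 t]
  rw [hsum2]
  have hB0 : B 0 = gdef m T f 0 (fun i => i.elim0) := by
    show (if hn : (0:ℕ) ≤ T then gdef m T f 0 (_root_.restrict zp 0 hn) else 0) = _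
    rw [dif_pos (Nat.zero_le T)]
    congr 1
    funext i
    exact i.elim0
  have hBT : B T = f zp := by
    show (if hn : T ≤ T then gdef m T f T (_root_.restrict zp T hn) else 0) = _
    rw [dif_pos (le_refl T)]
    have hr : _root_.restrict zp T (le_refl T) = zp := by
      funext s
      exact congrArg zp (Fin.ext rfl)
    rw [hr, gdef_top]
  rw [hB0, hBT, hf]
  simp only [if_neg hzp]
  ring
end

section
/- Under the assumption that P(Z_1 = z_1, ..., Z_T = z_T) > 0 for every (z_1,...,z_T) ∈ 𝕆^T, the adapted process U in the representation P(Z_{T+1} = z | Z_1,...,Z_T) = c - ∑_{t=0}^{T-1} U_tᵀ e(Z_{t+1}) is unique: any two adapted processes U, U' satisfying this representation coincide almost surely. -/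
open Finset

lemma eVec_sum (m : ℕ) (i : Fin m) : ∑ w : Fin (m + 1), eVec m w i = 0 := by
  rw [Fin.sum_univ_succ]
  have h : ∑ w : Fin m, eVec m w.succ i = ∑ w : Fin m, if w = i then (1:ℝ) else 0 := by
    apply Finset.sum_congr rfl
    intro w _
    simp [eVec, Fin.ext_iff]
  have h0 : eVec m 0 i = -1 := by simp [eVec]
  rw [h, h0, Finset.sum_ite_eq' Finset.univ i]
  simp

lemma key_aux {m T : ℕ} (D : Fin T → (Fin T → Fin (m + 1)) → ℝ) (d : ℝ)
    (hdep : ∀ (t : Fin T) (zp zp' : Fin T → Fin (m + 1)),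
      (∀ s : Fin T, s.val ≤ t.val → zp s = zp' s) → D t zp = D t zp')
    (hzero : ∀ (t : Fin T) (zp : Fin T → Fin (m + 1)),
      ∑ w : Fin (m + 1), D t (Function.update zp t w) = 0)
    (hconst : ∀ zp, ∑ t : Fin T, D t zp = d) :
    ∀ (t : Fin T) (zp : Fin T → Fin (m + 1)), D t zp = 0 := by
  set S : ℕ → (Fin T → Fin (m + 1)) → ℝ :=
    fun k zp => ∑ t : Fin T, if t.val < k then D t zp else 0 with hS
  have hsplit : ∀ (k : ℕ) (hk : k < T) (zp : Fin T → Fin (m + 1)),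
      S (k + 1) zp = S k zp + D ⟨k, hk⟩ zp := by
    intro k hk zp
    have : ∀ t : Fin T, (if t.val < k + 1 then D t zp else 0)
        = (if t.val < k then D t zp else 0) + (if t = ⟨k, hk⟩ then D t zp else 0) := by
      intro t
      rcases lt_trichotomy t.val k with h | h | h
      · simp [h, Nat.lt_succ_of_lt h, Fin.ext_iff, h.ne]
      · simp [h, Fin.ext_iff]
      · have h1 : ¬ t.val < k + 1 := by omega
        have h2 : ¬ t.val < k := by omega
        simp [h1, h2, Fin.ext_iff, h.ne']
    rw [hS]
    simp only [this, Finset.sum_add_distrib, Finset.sum_ite_eq' Finset.univ, Finset.mem_univ,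
      if_pos]
  have A : ∀ (n : ℕ) (zp : Fin T → Fin (m + 1)), S (T - n) zp = d := by
    intro n
    induction n with
    | zero =>
        intro zp
        have : ∀ t : Fin T, (if t.val < T - 0 then D t zp else 0) = D t zp := by
          intro t; simp [t.isLt]
        rw [hS]; simp only [this]; exact hconst zp
    | succ n ih =>
        intro zp
        by_cases hn : n < T
        · set k := T - (n + 1) with hk
          have hkT : k < T := by omega
          have hTn : T - n = k + 1 := by omega
          set K : Fin T := ⟨k, hkT⟩ with hK
          have h1 : ∀ w : Fin (m + 1), S (k + 1) (Function.update zp K w) = d := by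
            intro w
            have := ih (Function.update zp K w)
            rwa [hTn] at this
          have hSd : ∀ w : Fin (m + 1), S k (Function.update zp K w) = S k zp := by
            intro w
            rw [hS]
            apply Finset.sum_congr rfl
            intro t _
            by_cases ht : t.val < k
            · simp only [ht, if_pos]
              apply hdep
              intro s hs
              apply Function.update_of_ne
              intro hsK
              have hsv : (s : ℕ) = k := by rw [hsK]
              omega
            · simp [ht]
          have h2 : ∀ w : Fin (m + 1),
              S k zp + D K (Function.update zp K w) = d := by
            intro w
            rw [← hSd w, ← hsplit k hkT]
            exact h1 w
          have h3 : ∑ w : Fin (m + 1), (S k zp + D K (Function.update zp K w))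
              = (m + 1 : ℝ) * d := by
            rw [Finset.sum_congr rfl (fun w _ => h2 w)]
            simp [Finset.sum_const, mul_comm]
          rw [Finset.sum_add_distrib, hzero K zp, add_zero, Finset.sum_const,
            Finset.card_univ, Fintype.card_fin, nsmul_eq_mul] at h3
          have hm : ((m : ℝ) + 1) ≠ 0 := by positivity
          have := mul_left_cancel₀ (by exact_mod_cast hm) (by push_cast at h3 ⊢; linarith : ((m:ℝ)+1) * S k zp = ((m:ℝ)+1) * d)
          exact this
        · have : T - (n + 1) = T - n := by omega
          rw [this]; exact ih zp
  have Akey : ∀ (k : ℕ), k ≤ T → ∀ zp, S k zp = d := by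
    intro k hk zp
    have := A (T - k) zp
    rwa [Nat.sub_sub_self hk] at this
  intro t zp
  have h1 := Akey (t.val + 1) t.isLt zp
  have h2 := Akey t.val t.isLt.le zp
  have := hsplit t.val t.isLt zp
  rw [h1, h2] at this
  have : D ⟨t.val, t.isLt⟩ zp = 0 := by linarith
  simpa using this


/-- Uniqueness of the adapted weights in the nonlinear predictor representation:
if every observation sequence `(z_1,…,z_T)` has positive probability, then any
two adapted processes `U, U'` (with constants `c, c'`) satisfying
`P(Z_{T+1} = z ∣ Z_1,…,Z_T) = c - ∑_t U_tᵀ e(Z_{t+1})` coincide (almost surely,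
hence here on every history). -/
theorem nonlinear_predictor_uniqueness (m T : ℕ)
    (p : (Fin (T + 1) → Fin (m + 1)) → ℝ)
    (hp : ∀ zp, 0 ≤ p zp) (hsum : ∑ zp, p zp = 1)
    (hpos : ∀ zp : Fin T → Fin (m + 1), 0 < ∑ w, p (Fin.snoc zp w))
    (z : Fin (m + 1))
    (U U' : (t : Fin T) → (Fin t.val → Fin (m + 1)) → Fin m → ℝ) (c c' : ℝ)
    (hU : ∀ zp : Fin T → Fin (m + 1),
      p (Fin.snoc zp z) / (∑ w, p (Fin.snoc zp w)) =
        c - ∑ t : Fin T, ∑ i, U t (restrict zp t.val t.isLt.le) i * eVec m (zp t) i)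
    (hU' : ∀ zp : Fin T → Fin (m + 1),
      p (Fin.snoc zp z) / (∑ w, p (Fin.snoc zp w)) =
        c' - ∑ t : Fin T, ∑ i, U' t (restrict zp t.val t.isLt.le) i * eVec m (zp t) i) :
    ∀ (t : Fin T) (zp : Fin T → Fin (m + 1)),
      U t (restrict zp t.val t.isLt.le) = U' t (restrict zp t.val t.isLt.le) := by
  set D : Fin T → (Fin T → Fin (m + 1)) → ℝ := fun t zp =>
    ∑ i, (U t (restrict zp t.val t.isLt.le) i - U' t (restrict zp t.val t.isLt.le) i)
      * eVec m (zp t) i with hDdef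
  have hrestrict : ∀ (t : Fin T) (zp zp' : Fin T → Fin (m + 1)),
      (∀ s : Fin T, s.val ≤ t.val → zp s = zp' s) →
      restrict zp t.val t.isLt.le = restrict zp' t.val t.isLt.le := by
    intro t zp zp' h
    funext s
    exact h ⟨s.val, lt_of_lt_of_le s.isLt t.isLt.le⟩ (Nat.le_of_lt s.isLt)
  have hdep : ∀ (t : Fin T) (zp zp' : Fin T → Fin (m + 1)),
      (∀ s : Fin T, s.val ≤ t.val → zp s = zp' s) → D t zp = D t zp' := by
    intro t zp zp' h
    rw [hDdef]
    simp only [hrestrict t zp zp' h, h t le_rfl]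
  have hupd : ∀ (t : Fin T) (zp : Fin T → Fin (m + 1)) (w : Fin (m + 1)),
      restrict (Function.update zp t w) t.val t.isLt.le = restrict zp t.val t.isLt.le := by
    intro t zp w
    funext s
    apply Function.update_of_ne
    intro hsK
    have : (s : ℕ) = t.val := congrArg Fin.val hsK
    omega
  have hzero : ∀ (t : Fin T) (zp : Fin T → Fin (m + 1)),
      ∑ w : Fin (m + 1), D t (Function.update zp t w) = 0 := by
    intro t zp
    have : ∀ w : Fin (m + 1), D t (Function.update zp t w) =
        ∑ i, (U t (restrict zp t.val t.isLt.le) i - U' t (restrict zp t.val t.isLt.le) i)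
          * eVec m w i := by
      intro w
      rw [hDdef]
      simp only [hupd t zp w, Function.update_self]
    rw [Finset.sum_congr rfl (fun w _ => this w), Finset.sum_comm]
    apply Finset.sum_eq_zero
    intro i _
    rw [← Finset.mul_sum, eVec_sum, mul_zero]
  have hconst : ∀ zp, ∑ t : Fin T, D t zp = c - c' := by
    intro zp
    have h1 := hU zp
    have h2 := hU' zp
    rw [hDdef]
    have : ∀ t : Fin T,
        (∑ i, (U t (restrict zp t.val t.isLt.le) i - U' t (restrict zp t.val t.isLt.le) i)
          * eVec m (zp t) i)
        = (∑ i, U t (restrict zp t.val t.isLt.le) i * eVec m (zp t) i)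
          - ∑ i, U' t (restrict zp t.val t.isLt.le) i * eVec m (zp t) i := by
      intro t
      rw [← Finset.sum_sub_distrib]
      exact Finset.sum_congr rfl fun i _ => by ring
    rw [Finset.sum_congr rfl (fun t _ => this t), Finset.sum_sub_distrib]
    linarith
  have hD0 := key_aux D (c - c') hdep hzero hconst
  intro t zp
  funext j
  set w : Fin (m + 1) := ⟨j.val + 1, by omega⟩ with hw
  have h0 := hD0 t (Function.update zp t w)
  rw [hDdef] at h0
  simp only [hupd t zp w, Function.update_self] at h0
  have hev : ∀ i : Fin m, eVec m w i = if i = j then (1:ℝ) else 0 := by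
    intro i
    simp [eVec, hw, Fin.ext_iff, eq_comm]
  rw [Finset.sum_congr rfl (fun i _ => by rw [hev i])] at h0
  simp only [mul_ite, mul_one, mul_zero, Finset.sum_ite_eq' Finset.univ, Finset.mem_univ,
    if_pos] at h0
  linarith
end

section
/- Let S_T be any σ(Z_1,...,Z_T)-measurable real random variable, where Z takes values in the finite set 𝕆 = {0,...,m}. Then there exist an adapted process U = (U_0,...,U_{T-1}) with U_t ∈ ℝ^m measurable w.r.t. σ(Z_1,...,Z_t), and a constant S_0 ∈ ℝ, such that S_T = S_0 - ∑_{t=0}^{T-1} U_tᵀ e(Z_{t+1}). Moreover, at each step, S_{t} may be chosen as S_t = (1/(m+1)) ∑_{z∈𝕆} s_{t+1}(Z_1,...,Z_t,z) where S_{t+1} = s_{t+1}(Z_1,...,Z_{t+1}). -/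
open Finset

noncomputable def sfamAux (m T : ℕ) (s : (Fin T → Fin (m + 1)) → ℝ) :
    (t : ℕ) → (Fin t → Fin (m + 1)) → ℝ := fun t =>
  if h : t < T then
    fun q => (∑ w : Fin (m + 1), sfamAux m T s (t + 1) (Fin.snoc q w)) / (m + 1)
  else if h' : t = T then cast (by rw [h']) s else fun _ => 0
termination_by t => T - t
decreasing_by omega

lemma sfamAux_top (m T : ℕ) (s : (Fin T → Fin (m + 1)) → ℝ) : sfamAux m T s T = s := by
  rw [sfamAux]
  simp

lemma sfamAux_rec (m T : ℕ) (s : (Fin T → Fin (m + 1)) → ℝ) (t : ℕ) (ht : t < T)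
    (q : Fin t → Fin (m + 1)) :
    sfamAux m T s t q = (∑ w : Fin (m + 1), sfamAux m T s (t + 1) (Fin.snoc q w)) / (m + 1) := by
  rw [sfamAux]
  simp [ht]

lemma step_lemma (m : ℕ) (f : Fin (m + 1) → ℝ) (w : Fin (m + 1)) :
    ∑ i : Fin m, ((∑ v, f v) / (m + 1) - f ⟨i.val + 1, by omega⟩) * eVec m w i
      = (∑ v, f v) / (m + 1) - f w := by
  set fbar : ℝ := (∑ v, f v) / (m + 1) with hfbar
  have hsum : ∑ v, f v = (m + 1) * fbar := by
    rw [hfbar]; field_simp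
  have hsucc : ∑ i : Fin m, f ⟨i.val + 1, by omega⟩ = (∑ v, f v) - f 0 := by
    have h1 := Fin.sum_univ_succ f
    have h2 : ∀ i : Fin m, f i.succ = f ⟨i.val + 1, by omega⟩ := fun i => rfl
    rw [h1]
    simp only [h2]
    ring
  by_cases h0 : w.val = 0
  · have hw : w = 0 := Fin.ext h0
    subst hw
    have he : ∀ i : Fin m, eVec m 0 i = -1 := fun i => by simp [eVec]
    calc ∑ i : Fin m, (fbar - f ⟨i.val + 1, by omega⟩) * eVec m 0 i
        = ∑ i : Fin m, (f ⟨i.val + 1, by omega⟩ - fbar) :=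
          Finset.sum_congr rfl fun i _ => by rw [he i]; ring
      _ = ((∑ v, f v) - f 0) - (m : ℝ) * fbar := by
          rw [Finset.sum_sub_distrib, hsucc, Finset.sum_const, Finset.card_univ,
            Fintype.card_fin, nsmul_eq_mul]
      _ = fbar - f 0 := by rw [hsum]; ring
  · have hm : w.val - 1 < m := by omega
    rw [Finset.sum_eq_single ⟨w.val - 1, hm⟩]
    · have he : eVec m w ⟨w.val - 1, hm⟩ = 1 := by
        unfold eVec
        rw [if_neg h0, if_pos (show w.val = w.val - 1 + 1 by omega)]
      rw [he]
      have hw : f ⟨(⟨w.val - 1, hm⟩ : Fin m).val + 1, by omega⟩ = f w := by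
        congr 1
        exact Fin.ext (by simp; omega)
      rw [hw]; ring
    · intro i _ hne
      have hz : eVec m w i = 0 := by
        unfold eVec
        rw [if_neg h0, if_neg]
        intro hc
        exact hne (Fin.ext (show i.val = w.val - 1 by omega))
      rw [hz, mul_zero]
    · intro h; exact absurd (Finset.mem_univ _) h

/-- Every `σ(Z_1,…,Z_T)`-measurable random variable `S_T = s(Z_1,…,Z_T)` admits
the representation `S_T = S_0 - ∑_{t=0}^{T-1} U_tᵀ e(Z_{t+1})` with `U` adapted,
where moreover the intermediate functions may be chosen by the averaging rule
`s_t(z_1,…,z_t) = (1/(m+1)) ∑_{z ∈ 𝕆} s_{t+1}(z_1,…,z_t,z)` and `S_0 = s_0`. -/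
theorem measurable_representation (m T : ℕ) (s : (Fin T → Fin (m + 1)) → ℝ) :
    ∃ (U : (t : Fin T) → (Fin t.val → Fin (m + 1)) → Fin m → ℝ)
      (sfam : (t : ℕ) → (Fin t → Fin (m + 1)) → ℝ),
      sfam T = s ∧
      (∀ t : ℕ, t < T → ∀ q : Fin t → Fin (m + 1),
        sfam t q = (∑ w : Fin (m + 1), sfam (t + 1) (Fin.snoc q w)) / (m + 1)) ∧
      (∀ zp : Fin T → Fin (m + 1),
        s zp = sfam 0 (fun i => i.elim0) -
          ∑ t : Fin T, ∑ i, U t (restrict zp t.val t.isLt.le) i * eVec m (zp t) i) := by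
  set sfam := sfamAux m T s with hsfam
  refine ⟨fun t q i => sfam t.val q - sfam (t.val + 1) (Fin.snoc q ⟨i.val + 1, by omega⟩),
    sfam, sfamAux_top m T s, fun t ht q => sfamAux_rec m T s t ht q, ?_⟩
  intro zp
  have key : ∀ t : Fin T,
      ∑ i : Fin m, (sfam t.val (_root_.restrict zp t.val t.isLt.le)
          - sfam (t.val + 1)
            (Fin.snoc (_root_.restrict zp t.val t.isLt.le) ⟨i.val + 1, by omega⟩))
          * eVec m (zp t) i
        = sfam t.val (_root_.restrict zp t.val t.isLt.le)
          - sfam (t.val + 1) (_root_.restrict zp (t.val + 1) t.isLt) := by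
    intro t
    have hsnoc : Fin.snoc (_root_.restrict zp t.val t.isLt.le) (zp t)
        = _root_.restrict zp (t.val + 1) t.isLt := by
      funext i
      rcases Nat.lt_or_ge i.val t.val with h | h
      · have hi : i = Fin.castSucc ⟨i.val, h⟩ := by
          apply Fin.ext; simp
        rw [hi, Fin.snoc_castSucc]
        rfl
      · have hi : i = Fin.last t.val := by
          apply Fin.ext
          have := i.isLt
          simp only [Fin.val_last]
          omega
        rw [hi, Fin.snoc_last]
        rfl
    have := step_lemma m
      (fun w => sfam (t.val + 1) (Fin.snoc (_root_.restrict zp t.val t.isLt.le) w)) (zp t)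
    rw [← sfamAux_rec m T s t.val t.isLt (_root_.restrict zp t.val t.isLt.le), hsnoc] at this
    exact this
  calc s zp = sfam 0 (fun i => i.elim0)
        - (sfam 0 (fun i => i.elim0) - s zp) := by ring
    _ = sfam 0 (fun i => i.elim0) -
          ∑ t : Fin T, ∑ i, (sfam t.val (_root_.restrict zp t.val t.isLt.le)
            - sfam (t.val + 1)
              (Fin.snoc (_root_.restrict zp t.val t.isLt.le) ⟨i.val + 1, by omega⟩))
            * eVec m (zp t) i := by
      congr 1
      rw [Finset.sum_congr rfl fun t _ => key t]
      set g : ℕ → ℝ := fun t => if h : t ≤ T then sfam t (_root_.restrict zp t h) else 0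
        with hg
      have hgt : ∀ t : Fin T, sfam t.val (_root_.restrict zp t.val t.isLt.le)
          - sfam (t.val + 1) (_root_.restrict zp (t.val + 1) t.isLt)
          = g t.val - g (t.val + 1) := by
        intro t
        simp only [hg, dif_pos t.isLt.le, dif_pos (Nat.succ_le_of_lt t.isLt)]
      rw [Finset.sum_congr rfl fun t _ => hgt t,
        show (∑ t : Fin T, (g t.val - g (t.val + 1)))
            = ∑ k ∈ Finset.range T, (g k - g (k + 1)) from
          Fin.sum_univ_eq_sum_range (fun k => g k - g (k + 1)) T,
        Finset.sum_range_sub' g]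
      have hg0 : g 0 = sfam 0 (fun i => i.elim0) := by
        simp only [hg, dif_pos (Nat.zero_le T)]
        congr 1
        funext i
        exact i.elim0
      have hgT : g T = s zp := by
        simp only [hg, dif_pos le_rfl]
        have hr : _root_.restrict zp T le_rfl = zp := by
          funext i; rfl
        rw [hr, hsfam, sfamAux_top]
      rw [hg0, hgT]
end

section
/- Duality principle: Let (X,Z) = HMM(μ, A, C) on finite spaces 𝕊 and 𝕆. Fix an adapted control U ∈ 𝒰 and a σ(Z_1,...,Z_T)-measurable terminal function F : 𝕊 → ℝ. Let (Y, V) solve the backward stochastic difference equation Y_t(x) = (A Y_{t+1})(x) + c(x)ᵀ(U_t + V_t(x)) − V_t(x)ᵀ e(Z_{t+1}), Y_T = F, and define the estimator S_T = μ(Y_0) − ∑_{t=0}^{T-1} U_tᵀ e(Z_{t+1}). Then J_T(U;F) := var(Y_0(X_0)) + E[∑_{t=0}^{T-1} ℓ(Y_{t+1}, V_t, U_t; X_t)] = E[|F(X_T) − S_T|²], where ℓ(y,v,u;x) = (Γy)(x) + (u+v(x))ᵀ R(x) (u+v(x)). -/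
open Finset

/-- Joint law of `HMM(μ₀, A, C)`: `X = (X_0,…,X_T)` is Markov(μ₀, A) and
`Z_{t+1} ∣ X_t = x ∼ C(x,·)` for `t = 0,…,T-1` (here `zp t` stands for `Z_{t+1}`). -/
noncomputable def hmmJoint (d m T : ℕ) (μ0 : Fin d → ℝ)
    (A : Matrix (Fin d) (Fin d) ℝ) (C : Fin d → Fin (m + 1) → ℝ)
    (xp : Fin (T + 1) → Fin d) (zp : Fin T → Fin (m + 1)) : ℝ :=
  μ0 (xp 0) * (∏ t : Fin T, A (xp t.castSucc) (xp t.succ)) *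
    ∏ t : Fin T, C (xp t.castSucc) (zp t)

/-- `c(x)_i = C(x,i) - C(x,0)`, the mean of `e(Z_{t+1})` given `X_t = x`. -/
noncomputable def cvec (d m : ℕ) (C : Fin d → Fin (m + 1) → ℝ) (x : Fin d) : Fin m → ℝ :=
  fun i => C x i.succ - C x 0

/-- `R(x) = diag(c(x)) + C(x,0)(I + 𝟏𝟏ᵀ) - c(x)c(x)ᵀ`. -/
noncomputable def Rmat (d m : ℕ) (C : Fin d → Fin (m + 1) → ℝ) (x : Fin d)
    (i j : Fin m) : ℝ :=
  (if i = j then cvec d m C x i else 0) + C x 0 * ((if i = j then 1 else 0) + 1) -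
    cvec d m C x i * cvec d m C x j

/-- Carré du champ: `(Γf)(x) = ∑_y A(x,y) f(y)² - ((Af)(x))²`. -/
noncomputable def Gamma (d : ℕ) (A : Matrix (Fin d) (Fin d) ℝ)
    (f : Fin d → ℝ) (x : Fin d) : ℝ :=
  (∑ y, A x y * (f y) ^ 2) - (∑ y, A x y * f y) ^ 2

/-- Running cost `ℓ(y,v,u;x) = (Γy)(x) + (u + v(x))ᵀ R(x) (u + v(x))`. -/
noncomputable def ell (d m : ℕ) (A : Matrix (Fin d) (Fin d) ℝ)
    (C : Fin d → Fin (m + 1) → ℝ) (y : Fin d → ℝ) (v : Fin d → Fin m → ℝ)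
    (u : Fin m → ℝ) (x : Fin d) : ℝ :=
  Gamma d A y x + ∑ i, ∑ j, (u i + v x i) * Rmat d m C x i j * (u j + v x j)

/-!
Let `E_t = Y_t(X_t) - S_t` with `S_t = μ(Y_0) - ∑_{s<t} U_sᵀ e(Z_{s+1})`, so that
`E_0 = Y_0(X_0) - μ(Y_0)` and `E_T = F(X_T) - S_T`. Given `X_t = x` and the observations so far,
`X_{t+1}` and `Z_{t+1}` are independent. Averaging `E_{t+1}²` first over `X_{t+1}` gives
`(ΓY_{t+1})(x)` plus the square of the conditional mean, which by the BSΔE equals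
`E_t + wᵀ(e(Z_{t+1}) - c(x))` with `w = U_t + V_t(x)`; this innovation has mean zero and variance
`wᵀR(x)w` under `C(x,·)`. Hence `E[E_{t+1}²] = E[E_t²] + E[ℓ_t]`, and induction on the horizon,
starting from `E[E_0²] = var(Y_0(X_0))`, gives the identity.
-/

theorem sum_mul_sub_sq_of_sum_eq_one {ι : Type*} [Fintype ι] {p : ι → ℝ}
    (hp : ∑ i, p i = 1) (f : ι → ℝ) (r : ℝ) :
    ∑ i, p i * (f i - r) ^ 2 =
      (∑ i, p i * f i ^ 2 - (∑ i, p i * f i) ^ 2) + (∑ i, p i * f i - r) ^ 2 := by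
  have expand : ∀ i, p i * (f i - r) ^ 2 = p i * f i ^ 2 - 2 * r * (p i * f i) + r ^ 2 * p i :=
    fun i => by ring
  simp only [expand, sum_add_distrib, sum_sub_distrib, ← mul_sum, hp]
  ring

theorem sum_sum_mul_mul_add {ι κ : Type*} [Fintype ι] [Fintype κ] {p : ι → ℝ} {q : κ → ℝ}
    (hp : ∑ i, p i = 1) (hq : ∑ j, q j = 1) (a : ℝ) (b : κ → ℝ) :
    ∑ i, ∑ j, p i * q j * (a + b j) = a + ∑ j, q j * b j := by
  simp only [mul_add, sum_add_distrib, ← sum_mul, ← mul_sum, hq, hp, mul_assoc, one_mul]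

theorem dotProduct_eVec_zero {m : ℕ} (w : Fin m → ℝ) : w ⬝ᵥ eVec m 0 = -∑ i, w i := by
  simp [dotProduct, eVec]

theorem dotProduct_eVec_succ {m : ℕ} (w : Fin m → ℝ) (k : Fin m) : w ⬝ᵥ eVec m k.succ = w k := by
  simp [dotProduct, eVec, Fin.val_eq_val, eq_comm]

section Observation

variable {d m : ℕ} (C : Fin d → Fin (m + 1) → ℝ) (x : Fin d) (w : Fin m → ℝ)

theorem sum_mul_dotProduct_eVec :
    ∑ z, C x z * (w ⬝ᵥ eVec m z) = w ⬝ᵥ cvec d m C x := by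
  rw [Fin.sum_univ_succ]
  simp only [dotProduct_eVec_zero, dotProduct_eVec_succ]
  simp only [dotProduct, cvec, mul_sub, sum_sub_distrib, ← sum_mul]
  rw [sum_congr rfl fun i _ => mul_comm (C x i.succ) (w i)]
  ring

theorem sum_mul_dotProduct_eVec_sq :
    ∑ z, C x z * (w ⬝ᵥ eVec m z) ^ 2 = C x 0 * (∑ i, w i) ^ 2 + ∑ i, C x i.succ * w i ^ 2 := by
  simp only [Fin.sum_univ_succ, dotProduct_eVec_zero, dotProduct_eVec_succ, neg_sq]

/- `R(x)` is the covariance matrix of `e(Z)` for `Z ∼ C(x,·)`. -/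
theorem quadForm_Rmat :
    ∑ i, ∑ j, w i * Rmat d m C x i j * w j =
      ∑ z, C x z * (w ⬝ᵥ eVec m z) ^ 2 - (w ⬝ᵥ cvec d m C x) ^ 2 := by
  rw [sum_mul_dotProduct_eVec_sq]
  simp only [Rmat, mul_add, add_mul, mul_sub, sub_mul, sum_add_distrib, sum_sub_distrib,
    mul_ite, ite_mul, mul_zero, zero_mul, mul_one, sum_ite_eq, mem_univ, if_true]
  have diag : ∑ i, w i * cvec d m C x i * w i + ∑ i, w i * C x 0 * w i =
      ∑ i, C x i.succ * w i ^ 2 := by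
    rw [← sum_add_distrib]
    exact sum_congr rfl fun i _ => by simp only [cvec]; ring
  have constant : ∑ i, ∑ j, w i * C x 0 * w j = C x 0 * (∑ i, w i) ^ 2 := by
    rw [sq, sum_mul_sum, mul_sum]
    exact sum_congr rfl fun i _ => by rw [mul_sum]; exact sum_congr rfl fun j _ => by ring
  have rankOne : ∑ i, ∑ j, w i * (cvec d m C x i * cvec d m C x j) * w j =
      (w ⬝ᵥ cvec d m C x) ^ 2 := by
    rw [sq, dotProduct, sum_mul_sum]
    exact sum_congr rfl fun i _ => sum_congr rfl fun j _ => by ring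
  linear_combination diag + constant - rankOne

end Observation

theorem expected_sq_error_succ {d m : ℕ} (A : Matrix (Fin d) (Fin d) ℝ)
    (C : Fin d → Fin (m + 1) → ℝ) {x : Fin d} (hA1 : ∑ y, A x y = 1) (hC1 : ∑ z, C x z = 1)
    {g s : ℝ} {u : Fin m → ℝ} {v : Fin d → Fin m → ℝ} {f : Fin (m + 1) → Fin d → ℝ}
    (hg : ∀ z, g = ∑ y, A x y * f z y + cvec d m C x ⬝ᵥ (u + v x) - v x ⬝ᵥ eVec m z) :
    ∑ y, ∑ z, A x y * C x z * (f z y - (s - u ⬝ᵥ eVec m z)) ^ 2 =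
      (g - s) ^ 2 + ∑ z, C x z * ell d m A C (f z) v u x := by
  set w := u + v x
  have innovation : ∀ z, ∑ y, A x y * f z y - (s - u ⬝ᵥ eVec m z) =
      w ⬝ᵥ eVec m z - (w ⬝ᵥ cvec d m C x - (g - s)) := by
    intro z
    rw [hg z, add_dotProduct, dotProduct_comm w]
    ring
  have transition : ∀ z, ∑ y, A x y * (f z y - (s - u ⬝ᵥ eVec m z)) ^ 2 =
      Gamma d A (f z) x + (w ⬝ᵥ eVec m z - (w ⬝ᵥ cvec d m C x - (g - s))) ^ 2 := by
    intro z
    rw [sum_mul_sub_sq_of_sum_eq_one hA1, innovation]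
    rfl
  have observation : ∑ z, C x z * (w ⬝ᵥ eVec m z - (w ⬝ᵥ cvec d m C x - (g - s))) ^ 2 =
      ∑ i, ∑ j, w i * Rmat d m C x i j * w j + (g - s) ^ 2 := by
    rw [sum_mul_sub_sq_of_sum_eq_one hC1, sum_mul_dotProduct_eVec, quadForm_Rmat]
    ring
  calc ∑ y, ∑ z, A x y * C x z * (f z y - (s - u ⬝ᵥ eVec m z)) ^ 2
      = ∑ z, C x z * ∑ y, A x y * (f z y - (s - u ⬝ᵥ eVec m z)) ^ 2 := by
        rw [sum_comm]
        simp only [mul_sum, mul_left_comm (C x _), mul_assoc]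
    _ = ∑ z, C x z * Gamma d A (f z) x +
          ∑ z, C x z * (w ⬝ᵥ eVec m z - (w ⬝ᵥ cvec d m C x - (g - s))) ^ 2 := by
        simp only [transition, mul_add, sum_add_distrib]
    _ = (g - s) ^ 2 + ∑ z, C x z * ell d m A C (f z) v u x := by
        have ell_eq : ∀ z, ell d m A C (f z) v u x =
            Gamma d A (f z) x + ∑ i, ∑ j, w i * Rmat d m C x i j * w j := fun z => rfl
        simp only [observation, ell_eq, mul_add, sum_add_distrib, ← sum_mul, hC1, one_mul]
        ring

theorem restrict_snoc {T : ℕ} {α : Type*} (zp : Fin T → α) (z : α) {t : ℕ}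
    (ht' : t ≤ T + 1) (ht : t ≤ T) :
    restrict (Fin.snoc zp z : Fin (T + 1) → α) t ht' = restrict zp t ht := by
  funext s
  exact Fin.snoc_castSucc (α := fun _ => α) (i := ⟨s, s.isLt.trans_le ht⟩) ..

theorem restrict_self {T : ℕ} {α : Type*} (zp : Fin T → α) (h : T ≤ T) :
    restrict zp T h = zp :=
  rfl

theorem sum_pi_fin_succ {n : ℕ} {α : Type*} [Fintype α] (g : (Fin (n + 1) → α) → ℝ) :
    ∑ f, g f = ∑ f : Fin n → α, ∑ a, g (Fin.snoc f a) := by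
  rw [← (Fin.snocEquiv fun _ => α).sum_comp g, Fintype.sum_prod_type, sum_comm]
  rfl

section Duality

variable {d m : ℕ} (μ0 : Fin d → ℝ) (A : Matrix (Fin d) (Fin d) ℝ) (C : Fin d → Fin (m + 1) → ℝ)
  (U : (t : ℕ) → (Fin t → Fin (m + 1)) → Fin m → ℝ)
  (Y : (t : ℕ) → (Fin t → Fin (m + 1)) → Fin d → ℝ)
  (V : (t : ℕ) → (Fin t → Fin (m + 1)) → Fin d → Fin m → ℝ)

noncomputable def hmmExpect (T : ℕ) (H : (Fin (T + 1) → Fin d) → (Fin T → Fin (m + 1)) → ℝ) :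
    ℝ :=
  ∑ xp, ∑ zp, hmmJoint d m T μ0 A C xp zp * H xp zp

def SolvesBSDE (T : ℕ) : Prop :=
  ∀ (zp : Fin T → Fin (m + 1)) (t : Fin T) (x : Fin d),
    Y t.val (restrict zp t.val t.isLt.le) x =
      ∑ y, A x y * Y (t.val + 1) (restrict zp (t.val + 1) t.isLt) y +
        cvec d m C x ⬝ᵥ (U t.val (restrict zp t.val t.isLt.le) +
          V t.val (restrict zp t.val t.isLt.le) x) -
        V t.val (restrict zp t.val t.isLt.le) x ⬝ᵥ eVec m (zp t)

noncomputable def estimator (t : ℕ) (zp : Fin t → Fin (m + 1)) : ℝ :=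
  ∑ x, μ0 x * Y 0 (fun i => i.elim0) x -
    ∑ s : Fin t, U s.val (restrict zp s.val s.isLt.le) ⬝ᵥ eVec m (zp s)

noncomputable def runningCost (T : ℕ) (xp : Fin (T + 1) → Fin d) (zp : Fin T → Fin (m + 1)) :
    ℝ :=
  ∑ t : Fin T, ell d m A C (Y (t.val + 1) (restrict zp (t.val + 1) t.isLt))
    (V t.val (restrict zp t.val t.isLt.le)) (U t.val (restrict zp t.val t.isLt.le))
    (xp t.castSucc)

variable {μ0 A C U Y V}

theorem hmmJoint_snoc {T : ℕ} (xp : Fin (T + 1) → Fin d) (zp : Fin T → Fin (m + 1)) (x : Fin d)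
    (z : Fin (m + 1)) :
    hmmJoint d m (T + 1) μ0 A C (Fin.snoc xp x) (Fin.snoc zp z) =
      hmmJoint d m T μ0 A C xp zp * (A (xp (Fin.last T)) x * C (xp (Fin.last T)) z) := by
  have h0 : (Fin.snoc xp x : Fin (T + 2) → Fin d) 0 = xp 0 :=
    Fin.snoc_castSucc (α := fun _ => Fin d) (i := 0) ..
  simp only [hmmJoint, Fin.prod_univ_castSucc, Fin.succ_castSucc, Fin.snoc_castSucc,
    Fin.succ_last, Fin.snoc_last, h0]
  ring

theorem hmmExpect_zero (H : (Fin 1 → Fin d) → (Fin 0 → Fin (m + 1)) → ℝ) :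
    hmmExpect μ0 A C 0 H = ∑ x, μ0 x * H (fun _ => x) (fun i => i.elim0) := by
  simp only [hmmExpect, hmmJoint, univ_eq_empty, prod_empty, mul_one, Fintype.sum_unique]
  exact Fintype.sum_equiv (Equiv.funUnique (Fin 1) (Fin d)) _ _ fun xp => by
    rw [Unique.eq_default fun i : Fin 0 => i.elim0]
    congr
    exact funext fun i => congrArg xp (Subsingleton.elim i 0)

theorem hmmExpect_succ {T : ℕ} (H : (Fin (T + 2) → Fin d) → (Fin (T + 1) → Fin (m + 1)) → ℝ) :
    hmmExpect μ0 A C (T + 1) H =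
      hmmExpect μ0 A C T fun xp zp => ∑ x, ∑ z,
        A (xp (Fin.last T)) x * C (xp (Fin.last T)) z * H (Fin.snoc xp x) (Fin.snoc zp z) := by
  simp only [hmmExpect, sum_pi_fin_succ (α := Fin d), sum_pi_fin_succ (α := Fin (m + 1)),
    hmmJoint_snoc, mul_sum]
  refine sum_congr rfl fun _ _ => sum_congr rfl fun _ _ => ?_
  rw [sum_comm]
  simp only [mul_assoc]

theorem hmmExpect_add {T : ℕ} (H₁ H₂ : (Fin (T + 1) → Fin d) → (Fin T → Fin (m + 1)) → ℝ) :
    hmmExpect μ0 A C T (fun xp zp => H₁ xp zp + H₂ xp zp) =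
      hmmExpect μ0 A C T H₁ + hmmExpect μ0 A C T H₂ := by
  simp only [hmmExpect, mul_add, sum_add_distrib]

theorem SolvesBSDE.of_succ {T : ℕ} (h : SolvesBSDE A C U Y V (T + 1)) :
    SolvesBSDE A C U Y V T := by
  intro zp t x
  have := h (Fin.snoc zp 0) t.castSucc x
  simpa (disch := omega) only [Fin.val_castSucc, Fin.snoc_castSucc, restrict_snoc] using this

theorem SolvesBSDE.last {T : ℕ} (h : SolvesBSDE A C U Y V (T + 1)) (zp : Fin T → Fin (m + 1))
    (z : Fin (m + 1)) (x : Fin d) :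
    Y T zp x = ∑ y, A x y * Y (T + 1) (Fin.snoc zp z) y +
      cvec d m C x ⬝ᵥ (U T zp + V T zp x) - V T zp x ⬝ᵥ eVec m z := by
  have := h (Fin.snoc zp z) (Fin.last T) x
  simpa (disch := omega) only [Fin.val_last, restrict_snoc, restrict_self, Fin.snoc_last]
    using this

theorem estimator_snoc {T : ℕ} (zp : Fin T → Fin (m + 1)) (z : Fin (m + 1)) :
    estimator μ0 U Y (T + 1) (Fin.snoc zp z) = estimator μ0 U Y T zp - U T zp ⬝ᵥ eVec m z := by
  simp (disch := omega) only [estimator, Fin.sum_univ_castSucc, Fin.val_castSucc,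
    Fin.snoc_castSucc, Fin.val_last, Fin.snoc_last, restrict_snoc, restrict_self]
  ring

theorem runningCost_snoc {T : ℕ} (xp : Fin (T + 1) → Fin d) (zp : Fin T → Fin (m + 1))
    (x : Fin d) (z : Fin (m + 1)) :
    runningCost A C U Y V (T + 1) (Fin.snoc xp x) (Fin.snoc zp z) =
      runningCost A C U Y V T xp zp +
        ell d m A C (Y (T + 1) (Fin.snoc zp z)) (V T zp) (U T zp) (xp (Fin.last T)) := by
  simp (disch := omega) only [runningCost, Fin.sum_univ_castSucc, Fin.val_castSucc,
    Fin.snoc_castSucc, Fin.val_last, restrict_snoc, restrict_self]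

theorem hmmExpect_sq_error (hμ1 : ∑ x, μ0 x = 1) (hA1 : ∀ x, ∑ y, A x y = 1)
    (hC1 : ∀ x, ∑ z, C x z = 1) :
    ∀ T, SolvesBSDE A C U Y V T →
      hmmExpect μ0 A C T (fun xp zp => (Y T zp (xp (Fin.last T)) - estimator μ0 U Y T zp) ^ 2) =
        (∑ x, μ0 x * Y 0 (fun i => i.elim0) x ^ 2 - (∑ x, μ0 x * Y 0 (fun i => i.elim0) x) ^ 2) +
          hmmExpect μ0 A C T (runningCost A C U Y V T)
  | 0, _ => by
    simp only [hmmExpect_zero, runningCost, estimator, univ_eq_empty, sum_empty, sub_zero,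
      mul_zero, sum_const_zero, add_zero]
    rw [sum_mul_sub_sq_of_sum_eq_one hμ1]
    ring
  | T + 1, hY => by
    have step : ∀ (xp : Fin (T + 1) → Fin d) (zp : Fin T → Fin (m + 1)),
        ∑ x, ∑ z, A (xp (Fin.last T)) x * C (xp (Fin.last T)) z *
          (Y (T + 1) (Fin.snoc zp z) x - estimator μ0 U Y (T + 1) (Fin.snoc zp z)) ^ 2 =
        (Y T zp (xp (Fin.last T)) - estimator μ0 U Y T zp) ^ 2 +
          ∑ z, C (xp (Fin.last T)) z *
            ell d m A C (Y (T + 1) (Fin.snoc zp z)) (V T zp) (U T zp) (xp (Fin.last T)) :=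
      fun xp zp => by
        simp only [estimator_snoc]
        exact expected_sq_error_succ A C (hA1 _) (hC1 _) fun z => hY.last zp z _
    have cost : ∀ (xp : Fin (T + 1) → Fin d) (zp : Fin T → Fin (m + 1)),
        ∑ x, ∑ z, A (xp (Fin.last T)) x * C (xp (Fin.last T)) z *
          runningCost A C U Y V (T + 1) (Fin.snoc xp x) (Fin.snoc zp z) =
        runningCost A C U Y V T xp zp + ∑ z, C (xp (Fin.last T)) z *
            ell d m A C (Y (T + 1) (Fin.snoc zp z)) (V T zp) (U T zp) (xp (Fin.last T)) :=
      fun xp zp => by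
        simp only [runningCost_snoc]
        exact sum_sum_mul_mul_add (hA1 _) (hC1 _) _ _
    simp only [hmmExpect_succ, Fin.snoc_last, step, cost, hmmExpect_add,
      hmmExpect_sq_error hμ1 hA1 hC1 T hY.of_succ]
    ring

end Duality

theorem duality_principle_general (d m T : ℕ)
    (μ0 : Fin d → ℝ) (A : Matrix (Fin d) (Fin d) ℝ) (C : Fin d → Fin (m + 1) → ℝ)
    (hμ1 : ∑ x, μ0 x = 1)
    (hA1 : ∀ x, ∑ y, A x y = 1)
    (hC1 : ∀ x, ∑ z, C x z = 1)
    -- adapted control, BSΔE solution pair, and terminal condition (all given as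
    -- functions of the observation history, i.e., adapted processes):
    (U : (t : ℕ) → (Fin t → Fin (m + 1)) → Fin m → ℝ)
    (Y : (t : ℕ) → (Fin t → Fin (m + 1)) → Fin d → ℝ)
    (V : (t : ℕ) → (Fin t → Fin (m + 1)) → Fin d → Fin m → ℝ)
    (F : (Fin T → Fin (m + 1)) → Fin d → ℝ)
    (hBSDE : ∀ (zp : Fin T → Fin (m + 1)) (t : Fin T) (x : Fin d),
      Y t.val (restrict zp t.val t.isLt.le) x =
        (∑ y, A x y * Y (t.val + 1) (restrict zp (t.val + 1) t.isLt) y) +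
        (∑ i, cvec d m C x i *
          (U t.val (restrict zp t.val t.isLt.le) i +
           V t.val (restrict zp t.val t.isLt.le) x i)) -
        ∑ i, V t.val (restrict zp t.val t.isLt.le) x i * eVec m (zp t) i)
    (hterm : Y T = F) :
    -- var(Y₀(X₀))
    ((∑ x, μ0 x * (Y 0 (fun i => i.elim0) x) ^ 2) -
        (∑ x, μ0 x * Y 0 (fun i => i.elim0) x) ^ 2) +
      -- E[∑_t ℓ(Y_{t+1}, V_t, U_t; X_t)]
      (∑ xp : Fin (T + 1) → Fin d, ∑ zp : Fin T → Fin (m + 1),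
        hmmJoint d m T μ0 A C xp zp *
          ∑ t : Fin T,
            ell d m A C (Y (t.val + 1) (restrict zp (t.val + 1) t.isLt))
              (V t.val (restrict zp t.val t.isLt.le))
              (U t.val (restrict zp t.val t.isLt.le)) (xp t.castSucc)) =
    -- E[|F(X_T) - S_T|²]
    ∑ xp : Fin (T + 1) → Fin d, ∑ zp : Fin T → Fin (m + 1),
      hmmJoint d m T μ0 A C xp zp *
        (F zp (xp (Fin.last T)) -
          ((∑ x, μ0 x * Y 0 (fun i => i.elim0) x) -
            ∑ t : Fin T, ∑ i,
              U t.val (restrict zp t.val t.isLt.le) i * eVec m (zp t) i)) ^ 2 := by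
  subst hterm
  exact (hmmExpect_sq_error hμ1 hA1 hC1 T hBSDE).symm

/-- Duality principle: for any adapted control `U` and any adapted solution
`(Y,V)` of the BSΔE `Y_t(x) = (AY_{t+1})(x) + c(x)ᵀ(U_t + V_t(x)) - V_t(x)ᵀ e(Z_{t+1})`
with terminal condition `Y_T = F`, the control cost
`J_T(U;F) = var(Y_0(X_0)) + E[∑_t ℓ(Y_{t+1},V_t,U_t;X_t)]` equals the
mean-squared error `E[|F(X_T) - S_T|²]` of the estimator
`S_T = μ(Y_0) - ∑_t U_tᵀ e(Z_{t+1})`. -/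
theorem duality_principle (d m T : ℕ)
    (μ0 : Fin d → ℝ) (A : Matrix (Fin d) (Fin d) ℝ) (C : Fin d → Fin (m + 1) → ℝ)
    (hμ0 : ∀ x, 0 ≤ μ0 x) (hμ1 : ∑ x, μ0 x = 1)
    (hA0 : ∀ x y, 0 ≤ A x y) (hA1 : ∀ x, ∑ y, A x y = 1)
    (hC0 : ∀ x z, 0 ≤ C x z) (hC1 : ∀ x, ∑ z, C x z = 1)
    -- adapted control, BSΔE solution pair, and terminal condition (all given as
    -- functions of the observation history, i.e., adapted processes):
    (U : (t : ℕ) → (Fin t → Fin (m + 1)) → Fin m → ℝ)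
    (Y : (t : ℕ) → (Fin t → Fin (m + 1)) → Fin d → ℝ)
    (V : (t : ℕ) → (Fin t → Fin (m + 1)) → Fin d → Fin m → ℝ)
    (F : (Fin T → Fin (m + 1)) → Fin d → ℝ)
    (hBSDE : ∀ (zp : Fin T → Fin (m + 1)) (t : Fin T) (x : Fin d),
      Y t.val (restrict zp t.val t.isLt.le) x =
        (∑ y, A x y * Y (t.val + 1) (restrict zp (t.val + 1) t.isLt) y) +
        (∑ i, cvec d m C x i *
          (U t.val (restrict zp t.val t.isLt.le) i +
           V t.val (restrict zp t.val t.isLt.le) x i)) -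
        ∑ i, V t.val (restrict zp t.val t.isLt.le) x i * eVec m (zp t) i)
    (hterm : Y T = F) :
    -- var(Y₀(X₀))
    ((∑ x, μ0 x * (Y 0 (fun i => i.elim0) x) ^ 2) -
        (∑ x, μ0 x * Y 0 (fun i => i.elim0) x) ^ 2) +
      -- E[∑_t ℓ(Y_{t+1}, V_t, U_t; X_t)]
      (∑ xp : Fin (T + 1) → Fin d, ∑ zp : Fin T → Fin (m + 1),
        hmmJoint d m T μ0 A C xp zp *
          ∑ t : Fin T,
            ell d m A C (Y (t.val + 1) (restrict zp (t.val + 1) t.isLt))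
              (V t.val (restrict zp t.val t.isLt.le))
              (U t.val (restrict zp t.val t.isLt.le)) (xp t.castSucc)) =
    -- E[|F(X_T) - S_T|²]
    ∑ xp : Fin (T + 1) → Fin d, ∑ zp : Fin T → Fin (m + 1),
      hmmJoint d m T μ0 A C xp zp *
        (F zp (xp (Fin.last T)) -
          ((∑ x, μ0 x * Y 0 (fun i => i.elim0) x) -
            ∑ t : Fin T, ∑ i,
              U t.val (restrict zp t.val t.isLt.le) i * eVec m (zp t) i)) ^ 2 :=
  duality_principle_general d m T μ0 A C hμ1 hA1 hC1 U Y V F hBSDE hterm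
end

section
/- Fixed-point property of the filter (HMM case): Let (X,Z) = HMM(μ,A,C) and fix an observation path z ∈ 𝕆^T with positive probability. Let π^(z)_t denote the nonlinear filter (conditional law of X_t given Z_1=z_1,...,Z_t=z_t). Define the map 𝒩 on T-tuples of probability measures ρ = (ρ_1,...,ρ_T) via the backward difference equation y_s = A y_{s+1} + c_{s+1} u_s with feedback u_s = φ(y_{s+1}; ρ_s, c_{s+1}) (and u_0 = φ(y_1; μ, c_1)), terminal condition y_t = f, and output (𝒩ρ)_t(f) = μ(y_0) − ∑_{s=0}^{t-1} u_s. Then 𝒩 π^(z) = π^(z). -/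
open Finset

/-- Nonlinear filter `π_t(x) = P(X_t = x ∣ Z_1 = z_1,…,Z_t = z_t)` for the fixed
observation path `z` (with `z s` standing for `z_{s+1}`), defined for `t ≤ T`.  -/
noncomputable def filt (d m T : ℕ) (μ0 : Fin d → ℝ)
    (A : Matrix (Fin d) (Fin d) ℝ) (C : Fin d → Fin (m + 1) → ℝ)
    (z : ℕ → Fin (m + 1)) (t : ℕ) (x : Fin d) : ℝ :=
  if h : t ≤ T then
    (∑ xp : Fin (T + 1) → Fin d, ∑ zq : Fin T → Fin (m + 1),
        if (∀ s : Fin T, s.val < t → zq s = z s.val) ∧ xp ⟨t, Nat.lt_succ_of_le h⟩ = x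
        then hmmJoint d m T μ0 A C xp zq else 0) /
      (∑ xp : Fin (T + 1) → Fin d, ∑ zq : Fin T → Fin (m + 1),
        if ∀ s : Fin T, s.val < t → zq s = z s.val
        then hmmJoint d m T μ0 A C xp zq else 0)
  else 0

/-- Feedback gain
`φ(f; ν, c) = -(1 - ν(c)²)⁻¹ ν((Af)(c - ν(c)))` when `1 - ν(c)² ≠ 0`, else `0`. -/
noncomputable def phi (d : ℕ) (A : Matrix (Fin d) (Fin d) ℝ)
    (f ν c : Fin d → ℝ) : ℝ :=
  if 1 - (∑ x, ν x * c x) ^ 2 ≠ 0 then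
    (-1 / (1 - (∑ x, ν x * c x) ^ 2)) *
      ∑ x, ν x * ((∑ y, A x y * f y) * (c x - ∑ x', ν x' * c x'))
  else 0

/-- Backward difference equation `y_s = A y_{s+1} + c_{s+1} u_s` with feedback
`u_s = φ(y_{s+1}; ρ_s, c_{s+1})` (and `ρ_0 = μ`), terminal condition `y_t = f`.
Here `ydual … k` is `y` at time index `s = t - k`; `cseq s = c_{s+1}` and
`νseq s = ρ_s` (with `νseq 0 = μ`). -/
noncomputable def ydual (d : ℕ) (A : Matrix (Fin d) (Fin d) ℝ)
    (cseq νseq : ℕ → Fin d → ℝ) (t : ℕ) (f : Fin d → ℝ) : ℕ → Fin d → ℝ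
  | 0 => f
  | k + 1 =>
      let yk := ydual d A cseq νseq t f k
      let s := t - k - 1
      let u := phi d A yk (νseq s) (cseq s)
      fun x => (∑ y, A x y * yk y) + cseq s x * u

/-- The control input `u_s` at `s = t - k - 1`, i.e. `u_s = φ(y_{s+1}; ρ_s, c_{s+1})`. -/
noncomputable def udual (d : ℕ) (A : Matrix (Fin d) (Fin d) ℝ)
    (cseq νseq : ℕ → Fin d → ℝ) (t : ℕ) (f : Fin d → ℝ) (k : ℕ) : ℝ :=
  phi d A (ydual d A cseq νseq t f k) (νseq (t - k - 1)) (cseq (t - k - 1))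

/-- Output of the fixed-point map: `(𝒩ρ)_t(f) = μ(y_0) - ∑_{s=0}^{t-1} u_s`. -/
noncomputable def Nmap (d : ℕ) (μ0 : Fin d → ℝ) (A : Matrix (Fin d) (Fin d) ℝ)
    (cseq νseq : ℕ → Fin d → ℝ) (t : ℕ) (f : Fin d → ℝ) : ℝ :=
  (∑ x, μ0 x * ydual d A cseq νseq t f t x) -
    ∑ k ∈ Finset.range t, udual d A cseq νseq t f k


/-!
Summing the joint law over the unobserved future makes the filter the normalisation of the
forward recursion `α_{s+1}(x) = ∑_w α_s(w) C(w, z_{s+1}) A(w, x)`, i.e. `π_{s+1}` is the Bayes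
update of `π_s` by the likelihood `g = C(·, z_{s+1}) = (1 + c_{s+1}) / 2`. For one such update
`π ↦ π⁺` the gain `u = φ(y; π, c)` is exactly the number with `π(Ay + c u) = π⁺(y) + u`; in the
degenerate case `π(c)² = 1` positivity of `π(g)` forces `π(c) = 1`, so `g = 1` `π`-a.s.,
`π⁺(y) = π(Ay)` and `φ = 0`. Telescoping this identity along the backward equation from
`y_t = f` gives `μ(y_0) = π_t(f) + ∑_s u_s`.
-/

theorem Fintype.sum_fin_snoc {α M : Type*} [Fintype α] [AddCommMonoid M] {n : ℕ}
    (F : (Fin (n + 1) → α) → M) :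
    ∑ p, F p = ∑ q : Fin n → α, ∑ y, F (Fin.snoc q y) := by
  rw [← Fintype.sum_equiv (Fin.snocEquiv fun _ => α) (fun qy => F (Fin.snoc qy.2 qy.1)) F
    fun _ => rfl, Fintype.sum_prod_type, sum_comm]

/- The decidability of the pinning condition is a parameter so that the lemma matches whichever
instance elaborated the `if` (for `ι = Fin T` that is `Nat.decidableForallFin`). -/
theorem Fintype.sum_ite_forall_imp_prod {ι κ : Type*} [Fintype ι] [DecidableEq ι] [Fintype κ]
    [DecidableEq κ] (P : ι → Prop) [DecidablePred P] (z : ι → κ)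
    [∀ q : ι → κ, Decidable (∀ i, P i → q i = z i)] (g : ι → κ → ℝ) (hg : ∀ i, ∑ j, g i j = 1) :
    ∑ q : ι → κ, (if ∀ i, P i → q i = z i then ∏ i, g i (q i) else 0) =
      ∏ i, if P i then g i (z i) else 1 := by
  have hq : ∀ q : ι → κ, (if ∀ i, P i → q i = z i then ∏ i, g i (q i) else 0) =
      ∏ i, if P i → q i = z i then g i (q i) else 0 := fun q => by
    rw [prod_ite_zero]
    congr 1
  simp only [hq]
  rw [← Fintype.prod_sum fun i j => if P i → j = z i then g i j else 0]
  refine Finset.prod_congr rfl fun i _ => ?_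
  by_cases hi : P i <;> simp [hi, hg]

theorem mul_eq_self_of_sum_mul_eq_sum {ι : Type*} [Fintype ι] {π g : ι → ℝ}
    (hπ : ∀ x, 0 ≤ π x) (hg : ∀ x, g x ≤ 1) (h : ∑ x, π x * g x = ∑ x, π x) (x : ι) :
    π x * g x = π x := by
  have hsum : ∑ x, π x * (1 - g x) = 0 := by
    simp only [mul_sub, mul_one, sum_sub_distrib, h, sub_self]
  have := (sum_eq_zero_iff_of_nonneg fun x _ => mul_nonneg (hπ x) (sub_nonneg.2 (hg x))).1
    hsum x (mem_univ x)
  linarith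

noncomputable def bayesUpdate {d : ℕ} (A : Matrix (Fin d) (Fin d) ℝ) (π g : Fin d → ℝ) : Fin d → ℝ :=
  fun x => (∑ w, π w * g w * A w x) / ∑ w, π w * g w

theorem sum_bayesUpdate_mul {d : ℕ} (A : Matrix (Fin d) (Fin d) ℝ) (π g y : Fin d → ℝ) :
    ∑ x, bayesUpdate A π g x * y x =
      (∑ w, π w * g w * ∑ x, A w x * y x) / ∑ w, π w * g w := by
  simp only [bayesUpdate, div_mul_eq_mul_div, ← sum_div, sum_mul, mul_sum]
  rw [sum_comm]
  simp only [mul_assoc]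

theorem sum_mul_add_phi_eq {d : ℕ} (A : Matrix (Fin d) (Fin d) ℝ) {π g : Fin d → ℝ}
    (hπ0 : ∀ x, 0 ≤ π x) (hπ1 : ∑ x, π x = 1) (hg : ∀ x, g x ≤ 1)
    (hπg : ∑ x, π x * g x ≠ 0) (y : Fin d → ℝ) :
    ∑ x, π x * ((∑ w, A x w * y w) + (2 * g x - 1) * phi d A y π (fun x => 2 * g x - 1)) =
      ∑ x, bayesUpdate A π g x * y x + phi d A y π (fun x => 2 * g x - 1) := by
  set v : Fin d → ℝ := fun x => ∑ w, A x w * y w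
  set u := phi d A y π (fun x => 2 * g x - 1) with hu_def
  obtain ⟨p, hp⟩ : ∃ p, ∑ x, π x * g x = p := ⟨_, rfl⟩
  have hb : ∑ x, π x * (2 * g x - 1) = 2 * p - 1 := by
    simp only [mul_sub, mul_one, sum_sub_distrib, hπ1, mul_left_comm _ (2 : ℝ), ← mul_sum, hp]
  have hlhs : ∑ x, π x * (v x + (2 * g x - 1) * u) = ∑ x, π x * v x + (2 * p - 1) * u := by
    rw [← hb, sum_mul, ← sum_add_distrib]
    exact sum_congr rfl fun x _ => by ring
  rw [sum_bayesUpdate_mul, hp]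
  change ∑ x, π x * (v x + (2 * g x - 1) * u) = (∑ w, π w * g w * v w) / p + u
  rw [hlhs]
  by_cases hdeg : 1 - (2 * p - 1) ^ 2 = 0
  · have hp1 : p = 1 := by
      have : p * (1 - p) = 0 := by linear_combination hdeg / 4
      rcases mul_eq_zero.1 this with h | h
      · exact absurd (hp.trans h) hπg
      · linarith
    have hπg_eq := mul_eq_self_of_sum_mul_eq_sum hπ0 hg (hp.trans (hp1.trans hπ1.symm))
    simp only [hp1, hπg_eq, div_one]
    ring
  · have hu : u = -1 / (1 - (2 * p - 1) ^ 2) *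
        (2 * ∑ x, π x * g x * v x - 2 * p * ∑ x, π x * v x) := by
      simp only [hu_def, phi]
      rw [hb, if_pos hdeg]
      congr 1
      rw [mul_sum, mul_sum, ← sum_sub_distrib]
      exact sum_congr rfl fun x _ => by ring
    have hp1 : 1 - p ≠ 0 := fun h => hdeg (by linear_combination (4 * p) * h)
    have hp0 : p ≠ 0 := hp ▸ hπg
    rw [hu]
    field_simp
    ring

theorem Nmap_eq_of_step {d : ℕ} (μ0 : Fin d → ℝ) (A : Matrix (Fin d) (Fin d) ℝ)
    (c ν : ℕ → Fin d → ℝ) (t : ℕ) (f : Fin d → ℝ) (hν0 : ν 0 = μ0)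
    (hstep : ∀ s < t, ∀ y : Fin d → ℝ,
      ∑ x, ν s x * ((∑ w, A x w * y w) + c s x * phi d A y (ν s) (c s)) =
        ∑ x, ν (s + 1) x * y x + phi d A y (ν s) (c s)) :
    Nmap d μ0 A c ν t f = ∑ x, ν t x * f x := by
  have htelescope : ∀ j ≤ t, ∑ x, ν (t - j) x * ydual d A c ν t f j x =
      ∑ x, ν t x * f x + ∑ k ∈ range j, udual d A c ν t f k := by
    intro j
    induction j with
    | zero => simp [ydual]
    | succ j ih =>
      intro hj
      have hs : t - (j + 1) + 1 = t - j := by omega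
      rw [sum_range_succ, ← add_assoc, ← ih (by omega), ← hs]
      exact hstep _ (by omega) _
  have h := htelescope t le_rfl
  rw [Nat.sub_self] at h
  rw [Nmap, ← hν0, h, add_sub_cancel_right]

noncomputable def forwardMeasure {d : ℕ} (μ0 : Fin d → ℝ) (w : ℕ → Fin d → Fin d → ℝ) :
    ℕ → Fin d → ℝ
  | 0 => μ0
  | t + 1 => fun x => ∑ y, forwardMeasure μ0 w t y * w t y x

section forwardMeasure

variable {d : ℕ} (μ0 : Fin d → ℝ)

theorem forwardMeasure_nonneg {w : ℕ → Fin d → Fin d → ℝ} (hμ0 : ∀ x, 0 ≤ μ0 x)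
    (hw : ∀ s a b, 0 ≤ w s a b) : ∀ t x, 0 ≤ forwardMeasure μ0 w t x
  | 0, x => hμ0 x
  | t + 1, _ => sum_nonneg fun y _ => mul_nonneg (forwardMeasure_nonneg hμ0 hw t y) (hw t y _)

theorem forwardMeasure_congr {w w' : ℕ → Fin d → Fin d → ℝ} :
    ∀ t, (∀ s < t, w s = w' s) → forwardMeasure μ0 w t = forwardMeasure μ0 w' t
  | 0, _ => rfl
  | t + 1, h => by
    funext x
    simp only [forwardMeasure, forwardMeasure_congr t fun s hs => h s (by omega), h t (by omega)]

variable {A : Matrix (Fin d) (Fin d) ℝ} (g : ℕ → Fin d → ℝ)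

theorem sum_forwardMeasure_succ (hA1 : ∀ x, ∑ y, A x y = 1) (s : ℕ) :
    ∑ x, forwardMeasure μ0 (fun s a b => g s a * A a b) (s + 1) x =
      ∑ a, forwardMeasure μ0 (fun s a b => g s a * A a b) s a * g s a := by
  simp only [forwardMeasure]
  rw [sum_comm]
  exact sum_congr rfl fun a _ => by simp only [← mul_assoc, ← mul_sum, hA1, mul_one]

theorem forwardMeasure_succ_div_sum (hA1 : ∀ x, ∑ y, A x y = 1) (s : ℕ)
    (hs : ∑ x, forwardMeasure μ0 (fun s a b => g s a * A a b) s x ≠ 0) :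
    (fun x => forwardMeasure μ0 (fun s a b => g s a * A a b) (s + 1) x /
        ∑ x', forwardMeasure μ0 (fun s a b => g s a * A a b) (s + 1) x') =
      bayesUpdate A (fun x => forwardMeasure μ0 (fun s a b => g s a * A a b) s x /
        ∑ x', forwardMeasure μ0 (fun s a b => g s a * A a b) s x') (g s) := by
  funext x
  simp only [bayesUpdate, div_mul_eq_mul_div, ← sum_div, div_div_div_cancel_right₀ hs,
    sum_forwardMeasure_succ μ0 g hA1]
  simp only [forwardMeasure, mul_assoc]

end forwardMeasure

noncomputable def pathWeight {d : ℕ} (μ0 : Fin d → ℝ) (w : ℕ → Fin d → Fin d → ℝ) (n : ℕ)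
    (p : Fin (n + 1) → Fin d) : ℝ :=
  μ0 (p 0) * ∏ s : Fin n, w s (p s.castSucc) (p s.succ)

section pathWeight

variable {d : ℕ} (μ0 : Fin d → ℝ) (w : ℕ → Fin d → Fin d → ℝ)

theorem pathWeight_snoc (n : ℕ) (q : Fin (n + 1) → Fin d) (y : Fin d) :
    pathWeight μ0 w (n + 1) (Fin.snoc q y) = pathWeight μ0 w n q * w n (q (Fin.last n)) y := by
  simp only [pathWeight, Fin.prod_univ_castSucc, Fin.succ_castSucc, Fin.snoc_castSucc,
    Fin.val_castSucc, Fin.succ_last, Fin.snoc_last, Fin.val_last, mul_assoc]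
  rfl

theorem sum_pathWeight_mul_last :
    ∀ (n : ℕ) (h : Fin d → ℝ),
      ∑ p, pathWeight μ0 w n p * h (p (Fin.last n)) = ∑ x, forwardMeasure μ0 w n x * h x
  | 0, h => by
    rw [← Fintype.sum_equiv (Equiv.funUnique (Fin 1) (Fin d)).symm _ _ fun _ => rfl]
    simp [pathWeight, forwardMeasure]
  | n + 1, h => by
    have ih := sum_pathWeight_mul_last n fun a => ∑ y, w n a y * h y
    simp only [Fintype.sum_fin_snoc, pathWeight_snoc, Fin.snoc_last, mul_assoc, ← mul_sum] at ih ⊢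
    rw [ih]
    simp only [forwardMeasure, mul_sum, sum_mul, mul_assoc]
    exact sum_comm

theorem sum_pathWeight_mul_of_stochastic (t : ℕ) (h : Fin d → ℝ) :
    ∀ n (htn : t ≤ n), (∀ s, t ≤ s → s < n → ∀ a, ∑ b, w s a b = 1) →
      ∑ p, pathWeight μ0 w n p * h (p ⟨t, Nat.lt_succ_of_le htn⟩) =
        ∑ x, forwardMeasure μ0 w t x * h x := by
  refine Nat.le_induction (fun _ => sum_pathWeight_mul_last μ0 w t h) fun n htn ih hw => ?_
  have hcoord : ∀ (q : Fin (n + 1) → Fin d) (y : Fin d),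
      (Fin.snoc q y : Fin (n + 2) → Fin d) ⟨t, by omega⟩ = q ⟨t, by omega⟩ :=
    fun q y => Fin.snoc_castSucc (i := ⟨t, by omega⟩) ..
  rw [← ih fun s hts hsn => hw s hts (by omega)]
  simp only [Fintype.sum_fin_snoc, pathWeight_snoc, hcoord, mul_right_comm _ (w n _ _),
    ← mul_sum, hw n htn n.lt_succ_self, mul_one]

end pathWeight

section hmm

variable {d m T : ℕ} {μ0 : Fin d → ℝ} {A : Matrix (Fin d) (Fin d) ℝ} {C : Fin d → Fin (m + 1) → ℝ}

theorem hmmJoint_nonneg (hμ0 : ∀ x, 0 ≤ μ0 x) (hA0 : ∀ x y, 0 ≤ A x y) (hC0 : ∀ x j, 0 ≤ C x j)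
    (xp : Fin (T + 1) → Fin d) (zq : Fin T → Fin (m + 1)) :
    0 ≤ hmmJoint d m T μ0 A C xp zq :=
  mul_nonneg (mul_nonneg (hμ0 _) (prod_nonneg fun _ _ => hA0 _ _)) (prod_nonneg fun _ _ => hC0 _ _)

theorem sum_hmmJoint_pinned (hC1 : ∀ x, ∑ j, C x j = 1) (z : ℕ → Fin (m + 1)) (t : ℕ)
    (xp : Fin (T + 1) → Fin d) :
    ∑ zq : Fin T → Fin (m + 1),
        (if ∀ s : Fin T, s.val < t → zq s = z s.val then hmmJoint d m T μ0 A C xp zq else 0) =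
      pathWeight μ0 (fun s a b => (if s < t then C a (z s) else 1) * A a b) T xp := by
  calc _ = μ0 (xp 0) * (∏ s : Fin T, A (xp s.castSucc) (xp s.succ)) *
        ∑ zq : Fin T → Fin (m + 1),
          (if ∀ s : Fin T, s.val < t → zq s = z s.val then ∏ s, C (xp s.castSucc) (zq s)
            else 0) := by
        rw [mul_sum]
        exact sum_congr rfl fun zq _ => by rw [mul_ite, mul_zero, hmmJoint]
    _ = _ := by
      rw [Fintype.sum_ite_forall_imp_prod (fun s : Fin T => s.val < t) (fun s => z s.val)
        (fun s j => C (xp s.castSucc) j) fun _ => hC1 _]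
      simp only [pathWeight, prod_mul_distrib, mul_assoc, mul_comm (∏ s : Fin T, A _ _)]

theorem sum_hmmJoint_pinned_mul (hA1 : ∀ x, ∑ y, A x y = 1) (hC1 : ∀ x, ∑ j, C x j = 1)
    (z : ℕ → Fin (m + 1)) (t : ℕ) (htT : t ≤ T) (h : Fin d → ℝ) :
    ∑ xp : Fin (T + 1) → Fin d, (∑ zq : Fin T → Fin (m + 1),
        if ∀ s : Fin T, s.val < t → zq s = z s.val then hmmJoint d m T μ0 A C xp zq else 0) *
          h (xp ⟨t, Nat.lt_succ_of_le htT⟩) =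
      ∑ x, forwardMeasure μ0 (fun s a b => C a (z s) * A a b) t x * h x := by
  simp only [sum_hmmJoint_pinned hC1]
  rw [sum_pathWeight_mul_of_stochastic _ _ t h T htT fun s hts _ a => by
      simp only [if_neg (not_lt.2 hts), one_mul, hA1],
    forwardMeasure_congr (w' := fun s a b => C a (z s) * A a b) _ t fun s hs => by
      simp only [if_pos hs]]

theorem sum_sum_hmmJoint_pinned (hA1 : ∀ x, ∑ y, A x y = 1) (hC1 : ∀ x, ∑ j, C x j = 1)
    (z : ℕ → Fin (m + 1)) (t : ℕ) (htT : t ≤ T) :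
    ∑ xp : Fin (T + 1) → Fin d, ∑ zq : Fin T → Fin (m + 1),
        (if ∀ s : Fin T, s.val < t → zq s = z s.val then hmmJoint d m T μ0 A C xp zq else 0) =
      ∑ x, forwardMeasure μ0 (fun s a b => C a (z s) * A a b) t x := by
  simpa only [mul_one] using sum_hmmJoint_pinned_mul hA1 hC1 z t htT fun _ => 1

theorem filt_eq_div_sum (hA1 : ∀ x, ∑ y, A x y = 1) (hC1 : ∀ x, ∑ j, C x j = 1)
    (z : ℕ → Fin (m + 1)) (t : ℕ) (htT : t ≤ T) :
    filt d m T μ0 A C z t = fun x => forwardMeasure μ0 (fun s a b => C a (z s) * A a b) t x /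
      ∑ x', forwardMeasure μ0 (fun s a b => C a (z s) * A a b) t x' := by
  funext x
  have hsplit : ∀ (xp : Fin (T + 1) → Fin d) (zq : Fin T → Fin (m + 1)),
      (if (∀ s : Fin T, s.val < t → zq s = z s.val) ∧ xp ⟨t, Nat.lt_succ_of_le htT⟩ = x
        then hmmJoint d m T μ0 A C xp zq else 0) =
      (if ∀ s : Fin T, s.val < t → zq s = z s.val then hmmJoint d m T μ0 A C xp zq else 0) *
        if xp ⟨t, Nat.lt_succ_of_le htT⟩ = x then 1 else 0 := fun _ _ => by
    rw [ite_zero_mul_ite_zero, mul_one]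
  rw [filt, dif_pos htT, sum_sum_hmmJoint_pinned hA1 hC1 z t htT]
  simp only [hsplit, ← sum_mul]
  rw [sum_hmmJoint_pinned_mul hA1 hC1 z t htT fun y => if y = x then 1 else 0]
  simp

theorem sum_forwardMeasure_pos (hμ0 : ∀ x, 0 ≤ μ0 x) (hA0 : ∀ x y, 0 ≤ A x y)
    (hA1 : ∀ x, ∑ y, A x y = 1) (hC0 : ∀ x j, 0 ≤ C x j) (hC1 : ∀ x, ∑ j, C x j = 1)
    (z : ℕ → Fin (m + 1))
    (hzpos : 0 < ∑ xp : Fin (T + 1) → Fin d, hmmJoint d m T μ0 A C xp (fun s => z s.val))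
    (t : ℕ) (htT : t ≤ T) :
    0 < ∑ x, forwardMeasure μ0 (fun s a b => C a (z s) * A a b) t x := by
  rw [← sum_sum_hmmJoint_pinned hA1 hC1 z t htT]
  refine hzpos.trans_le (sum_le_sum fun xp _ => ?_)
  refine (le_of_eq ?_).trans (single_le_sum (fun zq _ => ?_) (mem_univ fun s : Fin T => z s.val))
  · rw [if_pos fun _ _ => rfl]
  · split_ifs
    exacts [hmmJoint_nonneg hμ0 hA0 hC0 xp zq, le_rfl]

end hmm

/-- Fixed-point property of the nonlinear filter: for an `HMM(μ₀,A,C)` and an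
observation path `z` of positive probability, the map `𝒩` built from the
backward difference equation with `c_{s+1}(x) = 2C(x,z_{s+1}) - 1` and feedback
`φ` evaluated at the filter measures `ρ_s = π_s^{(z)}` (and `ρ_0 = μ₀`)
reproduces the filter: `(𝒩 π^{(z)})_t(f) = π_t^{(z)}(f)` for `1 ≤ t ≤ T`. -/
theorem filter_fixed_point (d m T : ℕ)
    (μ0 : Fin d → ℝ) (A : Matrix (Fin d) (Fin d) ℝ) (C : Fin d → Fin (m + 1) → ℝ)
    (hμ0 : ∀ x, 0 ≤ μ0 x) (hμ1 : ∑ x, μ0 x = 1)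
    (hA0 : ∀ x y, 0 ≤ A x y) (hA1 : ∀ x, ∑ y, A x y = 1)
    (hC0 : ∀ x z, 0 ≤ C x z) (hC1 : ∀ x, ∑ z, C x z = 1)
    (z : ℕ → Fin (m + 1))
    (hzpos : 0 < ∑ xp : Fin (T + 1) → Fin d,
      hmmJoint d m T μ0 A C xp (fun s => z s.val)) :
    ∀ t : ℕ, 1 ≤ t → t ≤ T → ∀ f : Fin d → ℝ,
      Nmap d μ0 A
        (fun s x => 2 * C x (z s) - 1)
        (fun s => if s = 0 then μ0 else filt d m T μ0 A C z s)
        t f =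
      ∑ x, filt d m T μ0 A C z t x * f x := by
  intro t _ htT f
  set α := forwardMeasure μ0 (fun s a b => C a (z s) * A a b)
  have hpos : ∀ s ≤ T, 0 < ∑ x, α s x := sum_forwardMeasure_pos hμ0 hA0 hA1 hC0 hC1 z hzpos
  have hC_le_one : ∀ x j, C x j ≤ 1 := fun x j =>
    hC1 x ▸ single_le_sum (fun j _ => hC0 x j) (mem_univ j)
  have hfilt : ∀ s ≤ T, (if s = 0 then μ0 else filt d m T μ0 A C z s) =
      fun x => α s x / ∑ x', α s x' := by
    rintro (_ | s) hs
    · simp [α, forwardMeasure, hμ1]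
    · exact filt_eq_div_sum hA1 hC1 z (s + 1) hs
  rw [Nmap_eq_of_step _ _ _ _ _ _ (if_pos rfl), hfilt t htT, filt_eq_div_sum hA1 hC1 z t htT]
  intro s hs y
  have hLs := (hpos s (by omega)).ne'
  rw [hfilt s (by omega), hfilt (s + 1) (by omega),
    forwardMeasure_succ_div_sum μ0 (fun s a => C a (z s)) hA1 s hLs]
  refine sum_mul_add_phi_eq A (fun x => div_nonneg (forwardMeasure_nonneg μ0 hμ0
    (fun s a b => mul_nonneg (hC0 a (z s)) (hA0 a b)) s x) (hpos s (by omega)).le)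
    (by rw [← sum_div, div_self hLs]) (fun x => hC_le_one x (z s)) ?_ y
  simp only [div_mul_eq_mul_div, ← sum_div]
  rw [← sum_forwardMeasure_succ μ0 (fun s a => C a (z s)) hA1]
  exact div_ne_zero (hpos (s + 1) (by omega)).ne' hLs
end
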